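/- arXiv:1405.4603 — 3 statements merged into one kernel-verified Lean document; each statement's English description precedes it below -/
import Mathlib

section
/- Let H̃ = H ⊕ T be the vector space direct sum of the Heisenberg algebra H and T = Φ[t], with multiplication (x+f)(y+g) = xy + f·y for x, y ∈ H and f, g ∈ T, where f·y denotes the module action (f·a = f', f·b = tf, f·c = f). Then H̃ is a right Leibniz algebra: (uv)w = (uw)v + u(vw) for all u, v, w ∈ H̃. -/
/-- The Heisenberg algebra on `Φ × Φ × Φ` with basis `a = (1,0,0)`, `b = (0,1,0)`,
`c = (0,0,1)` and multiplication `ab = -c`, `ba = c`, other basis products zero. -/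
def heisMul {Φ : Type*} [Field Φ] (x y : Φ × Φ × Φ) : Φ × Φ × Φ :=
  ((0 : Φ), (0 : Φ), x.2.1 * y.1 - x.1 * y.2.1)

/-- The right action of the Heisenberg algebra on `T = Φ[t]`:
`f·a = f'`, `f·b = t·f`, `f·c = f`, extended linearly. -/
noncomputable def heisAct {Φ : Type*} [Field Φ] (f : Polynomial Φ) (y : Φ × Φ × Φ) : Polynomial Φ :=
  y.1 • Polynomial.derivative f + y.2.1 • (Polynomial.X * f) + y.2.2 • f

/-- The Leibniz algebra `H̃ = H ⊕ Φ[t]` with multiplication `(x+f)(y+g) = xy + f·y`. -/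
noncomputable def tildeMul {Φ : Type*} [Field Φ] (u v : (Φ × Φ × Φ) × Polynomial Φ) :
    (Φ × Φ × Φ) × Polynomial Φ :=
  (heisMul u.1 v.1, heisAct u.2 v.1)

theorem tildeH_is_leibniz {Φ : Type*} [Field Φ] [CharZero Φ] :
    ∀ u v w : (Φ × Φ × Φ) × Polynomial Φ,
      tildeMul (tildeMul u v) w = (tildeMul (tildeMul u w) v) + tildeMul u (tildeMul v w) := by
  intro u v w
  simp only [tildeMul, heisMul, heisAct, Prod.mk_add_mk, Prod.mk.injEq, Prod.ext_iff]
  refine ⟨by simp, ?_⟩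
  simp only [map_add, Polynomial.derivative_smul, Polynomial.derivative_mul,
    Polynomial.derivative_X, Polynomial.derivative_C, one_mul, Polynomial.smul_eq_C_mul, map_sub, map_mul, map_zero]
  ring
end

section
/- The Leibniz algebra H̃ = H ⊕ Φ[t] satisfies the identity x(y(zt)) = 0 for all x, y, z, t ∈ H̃. -/
theorem tildeH_satisfies_x_yzt {Φ : Type*} [Field Φ] [CharZero Φ] :
    ∀ x y z t : (Φ × Φ × Φ) × Polynomial Φ,
      tildeMul x (tildeMul y (tildeMul z t)) = 0 := by
  intro x y z t
  simp [tildeMul, heisMul, heisAct, Prod.ext_iff]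
end

section
/- In the Leibniz algebra H̃, for every f ∈ Φ[t]: f·(ab) = -f, f·(ba) = f, and consequently for every natural number m the m-fold product f·(ab)·(ab)···(ab) (m factors (ab), left-normed) equals (-1)ᵐ f; in particular it is nonzero whenever f ≠ 0. -/
theorem tildeH_ab_action {Φ : Type*} [Field Φ] [CharZero Φ] :
    (∀ f : Polynomial Φ,
      heisAct f (heisMul ((1 : Φ), (0 : Φ), (0 : Φ)) ((0 : Φ), (1 : Φ), (0 : Φ))) = -f) ∧
    (∀ f : Polynomial Φ,
      heisAct f (heisMul ((0 : Φ), (1 : Φ), (0 : Φ)) ((1 : Φ), (0 : Φ), (0 : Φ))) = f) ∧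
    (∀ (f : Polynomial Φ) (m : ℕ),
      (fun g : Polynomial Φ =>
        heisAct g (heisMul ((1 : Φ), (0 : Φ), (0 : Φ)) ((0 : Φ), (1 : Φ), (0 : Φ))))^[m] f
        = ((-1 : Φ) ^ m) • f ∧
      (f ≠ 0 →
        (fun g : Polynomial Φ =>
          heisAct g (heisMul ((1 : Φ), (0 : Φ), (0 : Φ)) ((0 : Φ), (1 : Φ), (0 : Φ))))^[m] f
          ≠ 0)) := by
  have hneg : ∀ f : Polynomial Φ,
      heisAct f (heisMul ((1 : Φ), (0 : Φ), (0 : Φ)) ((0 : Φ), (1 : Φ), (0 : Φ))) = -f := by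
    intro f
    simp [heisAct, heisMul]
  refine ⟨hneg, ?_, ?_⟩
  · intro f; simp [heisAct, heisMul]
  · intro f m
    have key : (fun g : Polynomial Φ =>
        heisAct g (heisMul ((1 : Φ), (0 : Φ), (0 : Φ)) ((0 : Φ), (1 : Φ), (0 : Φ))))^[m] f
        = ((-1 : Φ) ^ m) • f := by
      induction m with
      | zero => simp
      | succ n ih =>
        rw [Function.iterate_succ_apply', ih, hneg, pow_succ]
        rw [mul_smul, neg_one_smul, smul_neg]
    refine ⟨key, fun hf h0 => hf ?_⟩
    rw [key] at h0
    have : ((-1 : Φ) ^ m) ≠ 0 := pow_ne_zero m (by norm_num)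
    simpa [smul_eq_zero, this] using h0
end
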